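/- Let X ⊆ ℝ^n be a nonempty (possibly unbounded) open set, let F : X × ℝ^M → ℝ be jointly continuous, and let f : X → ℝ be continuous with f(x) ∈ int R_x for every x ∈ X. Then for every ε > 0 there exist a subset Γ_ε ⊂ X that is closed and nowhere dense in X, and a smooth function U_ε ∈ C^∞(X ∖ Γ_ε), such that f(x) ≤ T(x,D)U_ε(x) ≤ f(x) + ε for all x ∈ X ∖ Γ_ε. -/

import Mathlib

/-!
At each `x₀ ∈ X` pick a jet `ξ` with `f x₀ < F x₀ ξ < f x₀ + ε` (possible as `f x₀ ∈ int R_x₀`)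
and a polynomial `P` whose derivatives `D^p P (x₀)` are the entries of `ξ`. By continuity,
`f < T P < f + ε` on an open neighbourhood of `x₀` in `X`. Countably many of these neighbourhoods
`W k` cover `X`; the open sets `W k \ closure (⋃ j < k, W j)` are pairwise disjoint and their union
`O` is dense in `X`, so gluing the polynomials gives a smooth `U` on `O` with `f ≤ T U ≤ f + ε`
there, and `Γ = X \ O` is closed and nowhere dense in `X`.
-/
open Set Topology Filter

/-- The partial derivative of `f` in the `i`-th coordinate direction. -/
noncomputable def pder {n : ℕ} (i : Fin n) (f : (Fin n → ℝ) → ℝ) : (Fin n → ℝ) → ℝ :=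
  fun x => fderiv ℝ f x (Pi.single i 1)

/-- The multi-index partial derivative `D^p f` for a multi-index `p : Fin n → ℕ`. -/
noncomputable def mderiv {n : ℕ} (p : Fin n → ℕ) (f : (Fin n → ℝ) → ℝ) : (Fin n → ℝ) → ℝ :=
  (List.finRange n).foldr (fun i g => (pder i)^[p i] g) f

/-- The nonlinear partial differential operator `T(x,D)` associated to `F`, where
`e : Fin M → (Fin n → ℕ)` enumerates the multi-indices `p` with `|p| ≤ m`:
`T(x,D)U(x) = F(x, (D^p U(x))_{|p| ≤ m})`. -/
noncomputable def TOp {n M : ℕ} (e : Fin M → (Fin n → ℕ))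
    (F : (Fin n → ℝ) → (Fin M → ℝ) → ℝ) (U : (Fin n → ℝ) → ℝ) : (Fin n → ℝ) → ℝ :=
  fun x => F x (fun i => mderiv (e i) U x)

open scoped ContDiff

section PartialDerivatives

variable {n : ℕ}

theorem Filter.EventuallyEq.pder {f g : (Fin n → ℝ) → ℝ} {x : Fin n → ℝ} (h : f =ᶠ[𝓝 x] g)
    (i : Fin n) : pder i f =ᶠ[𝓝 x] pder i g :=
  h.eventuallyEq_nhds.mono fun _ hy => by simp only [_root_.pder, hy.fderiv_eq]

theorem Filter.EventuallyEq.mderiv {f g : (Fin n → ℝ) → ℝ} {x : Fin n → ℝ} (h : f =ᶠ[𝓝 x] g)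
    (p : Fin n → ℕ) : mderiv p f =ᶠ[𝓝 x] mderiv p g := by
  unfold _root_.mderiv
  induction List.finRange n with
  | nil => exact h
  | cons i t ih =>
    simp only [List.foldr_cons]
    induction p i with
    | zero => exact ih
    | succ k ihk => simpa only [Function.iterate_succ_apply'] using ihk.pder i

theorem ContDiff.pder {f : (Fin n → ℝ) → ℝ} (hf : ContDiff ℝ ∞ f) (i : Fin n) :
    ContDiff ℝ ∞ (pder i f) :=
  (hf.fderiv_right le_rfl).clm_apply contDiff_const

theorem ContDiff.iterate_pder {f : (Fin n → ℝ) → ℝ} (hf : ContDiff ℝ ∞ f) (i : Fin n) (k : ℕ) :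
    ContDiff ℝ ∞ ((_root_.pder i)^[k] f) := by
  induction k with
  | zero => exact hf
  | succ k ih => simpa only [Function.iterate_succ_apply'] using ih.pder i

theorem ContDiff.foldr_iterate_pder {f : (Fin n → ℝ) → ℝ} (hf : ContDiff ℝ ∞ f)
    (p : Fin n → ℕ) (l : List (Fin n)) :
    ContDiff ℝ ∞ (l.foldr (fun i g => (_root_.pder i)^[p i] g) f) := by
  induction l with
  | nil => exact hf
  | cons i t ih => exact ih.iterate_pder i (p i)

theorem ContDiff.mderiv {f : (Fin n → ℝ) → ℝ} (hf : ContDiff ℝ ∞ f) (p : Fin n → ℕ) :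
    ContDiff ℝ ∞ (mderiv p f) :=
  hf.foldr_iterate_pder p _

theorem pder_fun_sum {ι : Type*} {s : Finset ι} {f : ι → (Fin n → ℝ) → ℝ}
    (hf : ∀ j ∈ s, Differentiable ℝ (f j)) (i : Fin n) :
    pder i (fun y => ∑ j ∈ s, f j y) = fun y => ∑ j ∈ s, pder i (f j) y := by
  funext y
  simp only [pder, fderiv_fun_sum fun j hj => (hf j hj) y, sum_apply]

theorem mderiv_fun_sum {ι : Type*} {s : Finset ι} {f : ι → (Fin n → ℝ) → ℝ}
    (hf : ∀ j ∈ s, ContDiff ℝ ∞ (f j)) (p : Fin n → ℕ) :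
    mderiv p (fun y => ∑ j ∈ s, f j y) = fun y => ∑ j ∈ s, mderiv p (f j) y := by
  have hiter : ∀ (g : ι → (Fin n → ℝ) → ℝ), (∀ j ∈ s, ContDiff ℝ ∞ (g j)) → ∀ i k,
      (_root_.pder i)^[k] (fun y => ∑ j ∈ s, g j y) =
        fun y => ∑ j ∈ s, (_root_.pder i)^[k] (g j) y := by
    intro g hg i k
    induction k with
    | zero => rfl
    | succ k ih =>
      simp only [Function.iterate_succ_apply', ih]
      exact pder_fun_sum (fun j hj => ((hg j hj).iterate_pder i k).differentiable (by simp)) i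
  unfold _root_.mderiv
  induction List.finRange n with
  | nil => rfl
  | cons i t ih =>
    simp only [List.foldr_cons, ih]
    exact hiter _ (fun j hj => (hf j hj).foldr_iterate_pder p t) i (p i)

end PartialDerivatives

section ShiftedMonomial

variable {n : ℕ}

noncomputable def shiftedMonomial (c : ℝ) (a : Fin n → ℝ) (q : Fin n → ℕ) :
    (Fin n → ℝ) → ℝ :=
  fun y => c * ∏ k, (y k - a k) ^ q k

theorem contDiff_shiftedMonomial (c : ℝ) (a : Fin n → ℝ) (q : Fin n → ℕ) :
    ContDiff ℝ ∞ (shiftedMonomial c a q) :=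
  contDiff_const.mul <| contDiff_prod fun k _ =>
    ((contDiff_apply ℝ ℝ k).sub contDiff_const).pow (q k)

theorem pder_shiftedMonomial (c : ℝ) (a : Fin n → ℝ) (q : Fin n → ℕ) (i : Fin n) :
    pder i (shiftedMonomial c a q) =
      shiftedMonomial (c * q i) a (Function.update q i (q i - 1)) := by
  funext y
  have hfactor : ∀ k, HasFDerivAt (fun z : Fin n → ℝ => (z k - a k) ^ q k)
      ((q k * (y k - a k) ^ (q k - 1)) • ContinuousLinearMap.proj k) y := fun k => by
    have hderiv : HasDerivAt (fun t : ℝ => (t - a k) ^ q k)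
        (q k * (y k - a k) ^ (q k - 1)) (y k) := by
      simpa using ((hasDerivAt_id (y k)).sub_const (a k)).fun_pow (q k)
    exact hderiv.comp_hasFDerivAt y
      (ContinuousLinearMap.proj (R := ℝ) (φ := fun _ : Fin n => ℝ) k).hasFDerivAt
  have hsplit : ∏ k, (y k - a k) ^ Function.update q i (q i - 1) k =
      (y i - a i) ^ (q i - 1) * ∏ k ∈ Finset.univ.erase i, (y k - a k) ^ q k := by
    rw [← Finset.mul_prod_erase _ _ (Finset.mem_univ i), Function.update_self]
    congr 1
    exact Finset.prod_congr rfl fun k hk => by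
      rw [Function.update_of_ne (Finset.ne_of_mem_erase hk)]
  have hmonomial : HasFDerivAt (shiftedMonomial c a q) _ y :=
    (HasFDerivAt.finsetProd fun k _ => hfactor k).const_mul c
  rw [pder, hmonomial.fderiv, shiftedMonomial, hsplit]
  simp only [smul_apply, sum_apply, ContinuousLinearMap.proj_apply,
    Pi.single_apply, smul_eq_mul, mul_ite, mul_one, mul_zero, Finset.sum_ite_eq',
    Finset.mem_univ, if_true]
  ring

theorem iterate_pder_shiftedMonomial (c : ℝ) (a : Fin n → ℝ) (q : Fin n → ℕ) (i : Fin n)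
    (k : ℕ) : (pder i)^[k] (shiftedMonomial c a q) =
      shiftedMonomial (c * (q i).descFactorial k) a (Function.update q i (q i - k)) := by
  induction k with
  | zero => simp
  | succ k ih =>
    rw [Function.iterate_succ_apply', ih, pder_shiftedMonomial, Function.update_self,
      Function.update_idem, Nat.sub_sub, Nat.descFactorial_succ]
    congr 1
    push_cast
    ring

theorem foldr_iterate_pder_shiftedMonomial (p : Fin n → ℕ) (a : Fin n → ℝ) {l : List (Fin n)}
    (hl : l.Nodup) (c : ℝ) (q : Fin n → ℕ) :
    l.foldr (fun i g => (pder i)^[p i] g) (shiftedMonomial c a q) =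
      shiftedMonomial (c * (l.map fun i => ((q i).descFactorial (p i) : ℝ)).prod) a
        (fun j => if j ∈ l then q j - p j else q j) := by
  induction l with
  | nil => simp
  | cons i t ih =>
    obtain ⟨hit, hnt⟩ := List.nodup_cons.mp hl
    rw [List.foldr_cons, ih hnt, iterate_pder_shiftedMonomial, if_neg hit, List.map_cons,
      List.prod_cons]
    congr 1
    · ring
    · funext j
      by_cases hji : j = i
      · subst hji
        simp [hit]
      · simp [hji]

theorem mderiv_shiftedMonomial (p : Fin n → ℕ) (c : ℝ) (a : Fin n → ℝ) (q : Fin n → ℕ) :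
    mderiv p (shiftedMonomial c a q) =
      shiftedMonomial (c * ∏ i, ((q i).descFactorial (p i) : ℝ)) a (q - p) := by
  rw [mderiv, foldr_iterate_pder_shiftedMonomial p a (List.nodup_finRange n), Fin.prod_univ_def]
  congr 1
  funext j
  simp

theorem mderiv_shiftedMonomial_apply_self (p : Fin n → ℕ) (c : ℝ) (a : Fin n → ℝ)
    (q : Fin n → ℕ) :
    mderiv p (shiftedMonomial c a q) a = if q = p then c * ∏ i, ((p i).factorial : ℝ) else 0 := by
  rw [mderiv_shiftedMonomial, shiftedMonomial]
  split_ifs with hqp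
  · subst hqp
    simp [Nat.descFactorial_self]
  · obtain ⟨i, hi⟩ := Function.ne_iff.mp hqp
    rcases hi.lt_or_gt with hlt | hgt
    · simp [Finset.prod_eq_zero (Finset.mem_univ i), Nat.descFactorial_eq_zero_iff_lt.mpr hlt]
    · simp [Finset.prod_eq_zero (Finset.mem_univ i), Nat.sub_ne_zero_of_lt hgt]

end ShiftedMonomial

theorem exists_contDiff_mderiv_eq {n M : ℕ} {e : Fin M → Fin n → ℕ} (he : Function.Injective e)
    (a : Fin n → ℝ) (ξ : Fin M → ℝ) :
    ∃ P : (Fin n → ℝ) → ℝ, ContDiff ℝ ∞ P ∧ ∀ i, mderiv (e i) P a = ξ i := by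
  set c : Fin M → ℝ := fun j => ξ j / ∏ k, ((e j k).factorial : ℝ)
  refine ⟨fun y => ∑ j, shiftedMonomial (c j) a (e j) y,
    ContDiff.sum fun j _ => contDiff_shiftedMonomial _ a _, fun i => ?_⟩
  rw [mderiv_fun_sum fun j _ => contDiff_shiftedMonomial _ a _]
  simp only [mderiv_shiftedMonomial_apply_self, he.eq_iff, Finset.sum_ite_eq', Finset.mem_univ,
    if_true, c]
  exact div_mul_cancel₀ _ (Finset.prod_ne_zero_iff.mpr fun k _ => by positivity)

section Gluing

variable {α β : Type*} [TopologicalSpace α]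

/-- Removing the closure of the earlier sets, rather than the sets themselves as `disjointed` does,
keeps the pieces open. -/
def closureDisjointed (W : ℕ → Set α) (k : ℕ) : Set α :=
  W k \ closure (⋃ j < k, W j)

theorem closureDisjointed_subset (W : ℕ → Set α) (k : ℕ) : closureDisjointed W k ⊆ W k :=
  sdiff_subset

theorem IsOpen.closureDisjointed {W : ℕ → Set α} {k : ℕ} (hW : IsOpen (W k)) :
    IsOpen (closureDisjointed W k) :=
  hW.sdiff isClosed_closure

theorem subset_closure_iUnion_closureDisjointed (W : ℕ → Set α) (k : ℕ) :
    W k ⊆ closure (⋃ j, closureDisjointed W j) := by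
  induction k using Nat.strong_induction_on with
  | _ k ih =>
    intro x hx
    by_cases hxk : x ∈ closure (⋃ j < k, W j)
    · exact closure_minimal (iUnion₂_subset ih) isClosed_closure hxk
    · exact subset_closure (mem_iUnion.mpr ⟨k, hx, hxk⟩)

theorem iUnion_subset_closure_iUnion_closureDisjointed (W : ℕ → Set α) :
    ⋃ k, W k ⊆ closure (⋃ k, closureDisjointed W k) :=
  iUnion_subset (subset_closure_iUnion_closureDisjointed W)

noncomputable def glue (W : ℕ → Set α) (P : ℕ → α → β) (x : α) : β :=
  open Classical in
  if h : ∃ k, x ∈ W k then P (Nat.find h) x else P 0 x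

theorem glue_eq_of_mem_closureDisjointed (W : ℕ → Set α) (P : ℕ → α → β) {k : ℕ} {x : α}
    (hx : x ∈ closureDisjointed W k) : glue W P x = P k x := by
  classical
  have hex : ∃ j, x ∈ W j := ⟨k, hx.1⟩
  have hfind : Nat.find hex = k := (Nat.find_eq_iff hex).mpr
    ⟨hx.1, fun j hj hxj => hx.2 (subset_closure (mem_iUnion₂.mpr ⟨j, hj, hxj⟩))⟩
  simp only [glue, dif_pos hex, hfind]

theorem glue_eventuallyEq {W : ℕ → Set α} (P : ℕ → α → β) {k : ℕ} (hW : IsOpen (W k)) {x : α}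
    (hx : x ∈ closureDisjointed W k) : glue W P =ᶠ[𝓝 x] P k :=
  eventually_of_mem (hW.closureDisjointed.mem_nhds hx) fun _ hy =>
    glue_eq_of_mem_closureDisjointed W P hy

theorem isClosed_isNowhereDense_preimage_diff {X O : Set α} (hO : IsOpen O) (hOX : O ⊆ X)
    (hXO : X ⊆ closure O) :
    IsClosed (Subtype.val ⁻¹' (X \ O) : Set X) ∧
      IsNowhereDense (Subtype.val ⁻¹' (X \ O) : Set X) := by
  have hcompl : (Subtype.val ⁻¹' (X \ O) : Set X)ᶜ = Subtype.val ⁻¹' O := by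
    ext x
    simp
  rw [isClosed_isNowhereDense_iff_compl, hcompl, Subtype.dense_iff,
    image_preimage_eq_of_subset (by simpa using hOX)]
  exact ⟨hO.preimage continuous_subtype_val, hXO⟩

end Gluing

theorem exists_sub_mem_Ioo_of_mem_interior {S : Set ℝ} {t ε : ℝ} (ht : t ∈ interior S)
    (hε : 0 < ε) : ∃ s ∈ S, s - t ∈ Ioo 0 ε := by
  have hS : ∀ᶠ s in 𝓝[>] t, s ∈ S := nhdsWithin_le_nhds (mem_interior_iff_mem_nhds.mp ht)
  obtain ⟨s, hsS, hs⟩ := (hS.and (Ioo_mem_nhdsGT (lt_add_of_pos_right t hε))).exists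
  exact ⟨s, hsS, sub_pos.mpr hs.1, sub_lt_iff_lt_add'.mpr hs.2⟩

section Operator

variable {n M : ℕ} (e : Fin M → Fin n → ℕ) (F : (Fin n → ℝ) → (Fin M → ℝ) → ℝ)

theorem ContDiff.continuousOn_tOp {X : Set (Fin n → ℝ)}
    (hF : ContinuousOn (fun q : (Fin n → ℝ) × (Fin M → ℝ) => F q.1 q.2) (X ×ˢ univ))
    {P : (Fin n → ℝ) → ℝ} (hP : ContDiff ℝ ∞ P) : ContinuousOn (TOp e F P) X :=
  hF.comp (continuous_id.prodMk
    (continuous_pi fun i => (hP.mderiv (e i)).continuous)).continuousOn fun _ hy => ⟨hy, trivial⟩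

theorem Filter.EventuallyEq.tOp_eq {U P : (Fin n → ℝ) → ℝ} {x : Fin n → ℝ} (h : U =ᶠ[𝓝 x] P) :
    TOp e F U x = TOp e F P x :=
  congrArg (F x) (funext fun i => (h.mderiv (e i)).eq_of_nhds)

theorem exists_contDiff_tOp_sub_mem_Ioo (he : Function.Injective e) {x : Fin n → ℝ} {t ε : ℝ}
    (ht : t ∈ interior (range (F x))) (hε : 0 < ε) :
    ∃ P : (Fin n → ℝ) → ℝ, ContDiff ℝ ∞ P ∧ TOp e F P x - t ∈ Ioo 0 ε := by
  obtain ⟨_, ⟨ξ, rfl⟩, hξ⟩ := exists_sub_mem_Ioo_of_mem_interior ht hε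
  obtain ⟨P, hP, hPξ⟩ := exists_contDiff_mderiv_eq he x ξ
  exact ⟨P, hP, by simpa only [TOp, hPξ] using hξ⟩

end Operator

theorem approximate_solution_off_closed_nowhere_dense_upper_general
    {n M : ℕ} (X : Set (Fin n → ℝ)) (hXopen : IsOpen X) (hXne : X.Nonempty)
    (e : Fin M → (Fin n → ℕ)) (he : Function.Injective e)
    (F : (Fin n → ℝ) → (Fin M → ℝ) → ℝ)
    (hF : ContinuousOn (fun q : (Fin n → ℝ) × (Fin M → ℝ) => F q.1 q.2) (X ×ˢ Set.univ))
    (f : (Fin n → ℝ) → ℝ) (hf : ContinuousOn f X)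
    (hrc : ∀ x ∈ X, f x ∈ interior (Set.range (F x))) :
    ∀ ε > (0 : ℝ), ∃ Γ : Set (Fin n → ℝ), Γ ⊆ X ∧
      IsClosed (Subtype.val ⁻¹' Γ : Set X) ∧
      IsNowhereDense (Subtype.val ⁻¹' Γ : Set X) ∧
      ∃ U : (Fin n → ℝ) → ℝ, ContDiffOn ℝ (⊤ : ℕ∞) U (X \ Γ) ∧
        ∀ x ∈ X \ Γ, f x ≤ TOp e F U x ∧ TOp e F U x ≤ f x + ε := by
  intro ε hε
  choose P hP hPx using fun x₀ : X => exists_contDiff_tOp_sub_mem_Ioo e F he (hrc x₀ x₀.2) hε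
  set W : X → Set (Fin n → ℝ) := fun x₀ => X ∩ (fun y => TOp e F (P x₀) y - f y) ⁻¹' Ioo 0 ε
  have hW : ∀ x₀, IsOpen (W x₀) := fun x₀ =>
    (((hP x₀).continuousOn_tOp e F hF).sub hf).isOpen_inter_preimage hXopen isOpen_Ioo
  have : Nonempty X := hXne.to_subtype
  obtain ⟨g, hg⟩ := eq_open_union_nat W hW
  have hXW : X ⊆ ⋃ k, W (g k) := fun x hx => hg ▸ mem_iUnion.mpr ⟨⟨x, hx⟩, hx, hPx ⟨x, hx⟩⟩
  set O := ⋃ k, closureDisjointed (W ∘ g) k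
  have hOX : O ⊆ X := iUnion_subset fun k => (closureDisjointed_subset _ k).trans inter_subset_left
  obtain ⟨hclosed, hnowhere⟩ := isClosed_isNowhereDense_preimage_diff
    (isOpen_iUnion fun k => (hW (g k)).closureDisjointed) hOX
    (hXW.trans (iUnion_subset_closure_iUnion_closureDisjointed _))
  refine ⟨X \ O, sdiff_subset, hclosed, hnowhere, glue (W ∘ g) (P ∘ g), ?_⟩
  rw [sdiff_sdiff_cancel_left hOX]
  have hglue : ∀ x ∈ O, ∃ k, glue (W ∘ g) (P ∘ g) =ᶠ[𝓝 x] P (g k) ∧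
      TOp e F (P (g k)) x - f x ∈ Ioo 0 ε := fun x hx => by
    obtain ⟨k, hxk⟩ := mem_iUnion.mp hx
    exact ⟨k, glue_eventuallyEq (P ∘ g) (hW (g k)) hxk, (closureDisjointed_subset _ k hxk).2⟩
  refine ⟨fun x hx => ?_, fun x hx => ?_⟩ <;> obtain ⟨k, hU, hk⟩ := hglue x hx
  · exact ((hP (g k)).contDiffAt.congr_of_eventuallyEq hU).contDiffWithinAt
  · rw [hU.tOp_eq]
    exact ⟨by linarith [hk.1], by linarith [hk.2]⟩

/-- **Remark 1.2 (upper variant of Proposition 1).** Let `X ⊆ ℝⁿ` be a nonempty open set,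
`F` jointly continuous and `f` continuous with `f(x) ∈ int R_x` for all `x ∈ X`. Then for
every `ε > 0` there exist `Γ_ε ⊆ X`, closed and nowhere dense in `X`, and
`U_ε ∈ C^∞(X \ Γ_ε)` such that `f ≤ T(x,D)U_ε ≤ f + ε` on `X \ Γ_ε`. -/
theorem approximate_solution_off_closed_nowhere_dense_upper
    {n m M : ℕ} (X : Set (Fin n → ℝ)) (hXopen : IsOpen X) (hXne : X.Nonempty)
    (e : Fin M → (Fin n → ℕ)) (he : Function.Injective e)
    (hrange : ∀ p : Fin n → ℕ, (∑ i, p i) ≤ m ↔ p ∈ Set.range e)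
    (F : (Fin n → ℝ) → (Fin M → ℝ) → ℝ)
    (hF : ContinuousOn (fun q : (Fin n → ℝ) × (Fin M → ℝ) => F q.1 q.2) (X ×ˢ Set.univ))
    (f : (Fin n → ℝ) → ℝ) (hf : ContinuousOn f X)
    (hrc : ∀ x ∈ X, f x ∈ interior (Set.range (F x))) :
    ∀ ε > (0 : ℝ), ∃ Γ : Set (Fin n → ℝ), Γ ⊆ X ∧
      IsClosed (Subtype.val ⁻¹' Γ : Set X) ∧
      IsNowhereDense (Subtype.val ⁻¹' Γ : Set X) ∧
      ∃ U : (Fin n → ℝ) → ℝ, ContDiffOn ℝ (⊤ : ℕ∞) U (X \ Γ) ∧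
        ∀ x ∈ X \ Γ, f x ≤ TOp e F U x ∧ TOp e F U x ≤ f x + ε :=
  approximate_solution_off_closed_nowhere_dense_upper_general X hXopen hXne e he F hF f hf hrc
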